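/- Under the same setup (y = Ax + e, ‖x‖₀ ≤ s₁, |S| = s₂, x̄_S = A_S† y, x̄_{S^c} = 0, δ_{s₁+s₂} < 1), the ℓ₁-norm bound ‖(x - x̄)_S‖₁ ≤ √s₂ · δ_{s₁+s₂} ‖x - x̄‖₁ + √(s₂(1+δ_{s₂})) ‖e‖₂ holds. -/

import Mathlib

open Finset

/-- ℓ2 norm of a vector. -/
noncomputable def l2 {n : ℕ} (v : Fin n → ℝ) : ℝ := Real.sqrt (∑ i, v i ^ 2)

/-- ℓ1 norm of a vector. -/
noncomputable def l1 {n : ℕ} (v : Fin n → ℝ) : ℝ := ∑ i, |v i|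

/-- number of nonzero entries (ℓ0 "norm"). -/
noncomputable def spars {n : ℕ} (v : Fin n → ℝ) : ℕ := Set.ncard {i | v i ≠ 0}

/-- restriction of a vector to an index set (zero off the set). -/
def restr {n : ℕ} (S : Finset (Fin n)) (v : Fin n → ℝ) : Fin n → ℝ :=
  fun i => if i ∈ S then v i else 0

/-!
Write `v = x - x̄` and `w = v_S`. The normal equations say `A w ⟂ A x̄ - y`, so
`⟨A w, A v⟩ = -⟨A w, e⟩`. Every combination of `w` and `v` is supported on `S ∪ supp x`, so the
RIP of order `s₁ + s₂`, polarized on normalized vectors, gives `⟨w, v⟩ - ⟨A w, A v⟩ ≤ δ₁ ‖w‖ ‖v‖`.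
Since `⟨w, v⟩ = ‖w‖²` and `‖A w‖ ≤ √(1 + δ₂) ‖w‖`, this yields
`‖w‖² ≤ ‖w‖ (δ₁ ‖v‖ + √(1 + δ₂) ‖e‖)`, i.e. the ℓ₂ bound; Cauchy–Schwarz on `S` and
`‖v‖₂ ≤ ‖v‖₁` turn it into the ℓ₁ bound.
-/

open Matrix

section Norms

variable {n : ℕ}

lemma l2_nonneg (v : Fin n → ℝ) : 0 ≤ l2 v := Real.sqrt_nonneg _

lemma l2_sq (v : Fin n → ℝ) : l2 v ^ 2 = v ⬝ᵥ v := by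
  rw [l2, Real.sq_sqrt (sum_nonneg fun i _ => sq_nonneg _)]
  simp only [dotProduct, sq]

lemma l2_eq_zero_iff {v : Fin n → ℝ} : l2 v = 0 ↔ v = 0 := by
  rw [← sq_eq_zero_iff, l2_sq, dotProduct_self_eq_zero]

lemma l2_neg (v : Fin n → ℝ) : l2 (-v) = l2 v := by
  simp [l2]

lemma l2_smul (c : ℝ) (v : Fin n → ℝ) : l2 (c • v) = |c| * l2 v := by
  rw [← Real.sqrt_sq (abs_nonneg c), l2, l2, ← Real.sqrt_mul (sq_nonneg _), mul_sum]
  simp [mul_pow]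

lemma dotProduct_le_l2_mul_l2 (u v : Fin n → ℝ) : u ⬝ᵥ v ≤ l2 u * l2 v :=
  Real.sum_mul_le_sqrt_mul_sqrt univ u v

lemma l2_le_l1 (v : Fin n → ℝ) : l2 v ≤ l1 v := by
  rw [l2, l1, Real.sqrt_le_left (sum_nonneg fun i _ => abs_nonneg _)]
  simpa only [sq_abs] using sum_sq_le_sq_sum_of_nonneg (s := univ) fun i _ => abs_nonneg (v i)

lemma l1_le_sqrt_card_mul_l2 {S : Finset (Fin n)} {v : Fin n → ℝ} (hv : ∀ i ∉ S, v i = 0) :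
    l1 v ≤ √(#S : ℝ) * l2 v := by
  have hsupp : ∀ f : ℝ → ℝ, f 0 = 0 → ∑ i, f (v i) = ∑ i ∈ S, f (v i) := fun f hf =>
    (sum_subset (subset_univ S) fun i _ hi => by rw [hv i hi, hf]).symm
  rw [l1, l2, hsupp _ abs_zero, hsupp (· ^ 2) (zero_pow two_ne_zero),
    ← Real.sqrt_mul (by positivity), Real.le_sqrt (sum_nonneg fun i _ => abs_nonneg _) (by positivity)]
  simpa only [sq_abs] using sq_sum_le_card_mul_sum_sq (s := S) (f := fun i => |v i|)

lemma dotProduct_add_self (u v : Fin n → ℝ) :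
    (u + v) ⬝ᵥ (u + v) = u ⬝ᵥ u + 2 * (u ⬝ᵥ v) + v ⬝ᵥ v := by
  simp only [add_dotProduct, dotProduct_add, dotProduct_comm v u]; ring

lemma dotProduct_sub_self (u v : Fin n → ℝ) :
    (u - v) ⬝ᵥ (u - v) = u ⬝ᵥ u - 2 * (u ⬝ᵥ v) + v ⬝ᵥ v := by
  simp only [sub_dotProduct, dotProduct_sub, dotProduct_comm v u]; ring

end Norms

section Restriction

variable {n : ℕ}

lemma spars_le_ncard {T : Set (Fin n)} {v : Fin n → ℝ} (hv : ∀ i ∉ T, v i = 0) :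
    spars v ≤ T.ncard :=
  Set.ncard_le_ncard (fun i hi => by_contra fun hiT => hi (hv i hiT))

lemma restr_apply_of_notMem {S : Finset (Fin n)} {v : Fin n → ℝ} {i : Fin n} (hi : i ∉ S) :
    restr S v i = 0 :=
  if_neg hi

lemma restr_dotProduct_self (S : Finset (Fin n)) (v : Fin n → ℝ) :
    restr S v ⬝ᵥ v = l2 (restr S v) ^ 2 := by
  rw [l2_sq]
  refine sum_congr rfl fun i _ => ?_
  by_cases hi : i ∈ S <;> simp [restr, hi]

lemma spars_restr_le (S : Finset (Fin n)) (v : Fin n → ℝ) : spars (restr S v) ≤ #S :=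
  (spars_le_ncard fun _ hi => restr_apply_of_notMem (mem_coe.not.mp hi)).trans_eq
    (Set.ncard_coe_finset S)

lemma spars_single_le (i : Fin n) (c : ℝ) : spars (Pi.single i c) ≤ 1 :=
  (spars_le_ncard fun _ hj => Pi.single_eq_of_ne (Set.notMem_singleton_iff.mp hj) _).trans_eq
    (Set.ncard_singleton i)

lemma spars_smul_restr_add_smul_le {x xb : Fin n → ℝ} {S : Finset (Fin n)}
    (hxb : ∀ i ∉ S, xb i = 0) (a b : ℝ) :
    spars (a • restr S (x - xb) + b • (x - xb)) ≤ spars x + #S := by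
  refine (spars_le_ncard (T := ↑S ∪ {i | x i ≠ 0}) fun i hi => ?_).trans
    ((Set.ncard_union_le _ _).trans_eq ?_)
  · simp only [Set.mem_union, mem_coe, Set.mem_ofPred_eq, not_or, not_not] at hi
    simp [restr, hi.1, hi.2, hxb i hi.1]
  · rw [Set.ncard_coe_finset, spars, add_comm]

end Restriction

section NearIsometry

variable {m n : ℕ}

def NearIsometryAt (A : Matrix (Fin m) (Fin n) ℝ) (δ : ℝ) (v : Fin n → ℝ) : Prop :=
  (1 - δ) * l2 v ^ 2 ≤ l2 (A *ᵥ v) ^ 2 ∧ l2 (A *ᵥ v) ^ 2 ≤ (1 + δ) * l2 v ^ 2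

lemma NearIsometryAt.nonneg {A : Matrix (Fin m) (Fin n) ℝ} {δ : ℝ} {v : Fin n → ℝ}
    (h : NearIsometryAt A δ v) (hv : v ≠ 0) : 0 ≤ δ := by
  have : 0 < l2 v ^ 2 := pow_pos ((l2_nonneg v).lt_of_ne' (l2_eq_zero_iff.not.mpr hv)) 2
  nlinarith [h.1, h.2]

lemma dotProduct_sub_mulVec_dotProduct_le_of_l2_eq_one {A : Matrix (Fin m) (Fin n) ℝ} {δ : ℝ}
    {u v : Fin n → ℝ} (hu : l2 u = 1) (hv : l2 v = 1)
    (hadd : NearIsometryAt A δ (u + v)) (hsub : NearIsometryAt A δ (u - v)) :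
    u ⬝ᵥ v - (A *ᵥ u) ⬝ᵥ (A *ᵥ v) ≤ δ := by
  have huu : u ⬝ᵥ u = 1 := by rw [← l2_sq, hu, one_pow]
  have hvv : v ⬝ᵥ v = 1 := by rw [← l2_sq, hv, one_pow]
  have hadd := hadd.1
  have hsub := hsub.2
  simp only [l2_sq, mulVec_add, mulVec_sub, dotProduct_add_self,
    dotProduct_sub_self, huu, hvv] at hadd hsub
  linarith

lemma dotProduct_sub_mulVec_dotProduct_le {A : Matrix (Fin m) (Fin n) ℝ} {δ : ℝ}
    {u v : Fin n → ℝ} (h : ∀ a b : ℝ, NearIsometryAt A δ (a • u + b • v)) :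
    u ⬝ᵥ v - (A *ᵥ u) ⬝ᵥ (A *ᵥ v) ≤ δ * l2 u * l2 v := by
  rcases eq_or_ne u 0 with rfl | hu
  · simp [l2]
  rcases eq_or_ne v 0 with rfl | hv
  · simp [l2]
  have hu' : 0 < l2 u := (l2_nonneg u).lt_of_ne' (l2_eq_zero_iff.not.mpr hu)
  have hv' : 0 < l2 v := (l2_nonneg v).lt_of_ne' (l2_eq_zero_iff.not.mpr hv)
  have hunit := dotProduct_sub_mulVec_dotProduct_le_of_l2_eq_one (A := A) (δ := δ)
    (u := (l2 u)⁻¹ • u) (v := (l2 v)⁻¹ • v)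
    (by rw [l2_smul, abs_of_pos (inv_pos.mpr hu'), inv_mul_cancel₀ hu'.ne'])
    (by rw [l2_smul, abs_of_pos (inv_pos.mpr hv'), inv_mul_cancel₀ hv'.ne'])
    (h _ _) (by simpa only [neg_smul, ← sub_eq_add_neg] using h _ (-(l2 v)⁻¹))
  simp only [mulVec_smul, smul_dotProduct, dotProduct_smul, smul_eq_mul] at hunit
  calc u ⬝ᵥ v - (A *ᵥ u) ⬝ᵥ (A *ᵥ v)
      = l2 u * l2 v * ((l2 v)⁻¹ * ((l2 u)⁻¹ * (u ⬝ᵥ v))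
          - (l2 v)⁻¹ * ((l2 u)⁻¹ * ((A *ᵥ u) ⬝ᵥ (A *ᵥ v)))) := by
        field_simp
    _ ≤ l2 u * l2 v * δ := by gcongr
    _ = δ * l2 u * l2 v := by ring

end NearIsometry

section Recovery

variable {m n : ℕ}

lemma mulVec_dotProduct_eq_zero {A : Matrix (Fin m) (Fin n) ℝ} {S : Finset (Fin n)}
    {r : Fin m → ℝ} (hr : ∀ i ∈ S, ∑ j, A j i * r j = 0) {w : Fin n → ℝ}
    (hw : ∀ i ∉ S, w i = 0) : (A *ᵥ w) ⬝ᵥ r = 0 := by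
  rw [dotProduct_comm, dotProduct_mulVec]
  refine sum_eq_zero fun i _ => ?_
  by_cases hi : i ∈ S
  · have : (r ᵥ* A) i = 0 := by simpa only [vecMul, dotProduct, mul_comm] using hr i hi
    rw [this, zero_mul]
  · rw [hw i hi, mul_zero]

theorem l2_restr_sub_le {A : Matrix (Fin m) (Fin n) ℝ} {x xb : Fin n → ℝ} {e y : Fin m → ℝ}
    (hy : y = A *ᵥ x + e) {S : Finset (Fin n)}
    (hxbls : ∀ i ∈ S, ∑ j, A j i * ((A *ᵥ xb) j - y j) = 0) {δ₁ δ₂ : ℝ} (hδ₁ : 0 ≤ δ₁)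
    (hRIP₁ : ∀ a b : ℝ, NearIsometryAt A δ₁ (a • restr S (x - xb) + b • (x - xb)))
    (hRIP₂ : l2 (A *ᵥ restr S (x - xb)) ^ 2 ≤ (1 + δ₂) * l2 (restr S (x - xb)) ^ 2) :
    l2 (restr S (x - xb)) ≤ δ₁ * l2 (x - xb) + √(1 + δ₂) * l2 e := by
  set v := x - xb
  set w := restr S v
  have hAv : A *ᵥ v = -(A *ᵥ xb - y) - e := by
    rw [mulVec_sub, hy]; abel
  have hnormal : (A *ᵥ w) ⬝ᵥ (A *ᵥ xb - y) = 0 :=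
    mulVec_dotProduct_eq_zero hxbls fun i => restr_apply_of_notMem
  have hAw : l2 (A *ᵥ w) ≤ √(1 + δ₂) * l2 w := by
    rw [← Real.sqrt_sq (l2_nonneg w), ← Real.sqrt_mul' _ (sq_nonneg _)]
    exact Real.le_sqrt_of_sq_le hRIP₂
  have hnoise : (A *ᵥ w) ⬝ᵥ (A *ᵥ v) ≤ √(1 + δ₂) * l2 w * l2 e :=
    calc (A *ᵥ w) ⬝ᵥ (A *ᵥ v) = (A *ᵥ w) ⬝ᵥ (-e) := by
          rw [hAv, dotProduct_sub, dotProduct_neg, hnormal, dotProduct_neg]; ring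
      _ ≤ l2 (A *ᵥ w) * l2 e := by
          simpa only [l2_neg] using dotProduct_le_l2_mul_l2 (A *ᵥ w) (-e)
      _ ≤ √(1 + δ₂) * l2 w * l2 e := by gcongr; exact l2_nonneg e
  have hcoherence := dotProduct_sub_mulVec_dotProduct_le hRIP₁
  have hsq : l2 w * l2 w ≤ l2 w * (δ₁ * l2 v + √(1 + δ₂) * l2 e) := by
    rw [← sq, ← restr_dotProduct_self]; linarith
  rcases (l2_nonneg w).eq_or_lt with hw | hw
  · rw [← hw]
    exact add_nonneg (mul_nonneg hδ₁ (l2_nonneg v)) (mul_nonneg (Real.sqrt_nonneg _) (l2_nonneg e))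
  · exact le_of_mul_le_mul_left hsq hw

end Recovery

theorem stmt4_general {M N : ℕ} (A : Matrix (Fin M) (Fin N) ℝ)
    (x : Fin N → ℝ) (e : Fin M → ℝ) (y : Fin M → ℝ)
    (hy : y = A.mulVec x + e)
    (s₁ s₂ : ℕ) (hx : spars x ≤ s₁)
    (S : Finset (Fin N)) (hS : S.card = s₂)
    (xb : Fin N → ℝ)
    -- x̄ is supported on S and x̄_S = A_S† y, characterized by the normal equations
    (hxbsupp : ∀ i ∉ S, xb i = 0)
    (hxbls : ∀ i ∈ S, ∑ j, A j i * (A.mulVec xb j - y j) = 0)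
    (δ₁ δ₂ : ℝ)
    (hRIP₁ : ∀ v : Fin N → ℝ, spars v ≤ s₁ + s₂ →
      (1 - δ₁) * (l2 v) ^ 2 ≤ (l2 (A.mulVec v)) ^ 2 ∧
      (l2 (A.mulVec v)) ^ 2 ≤ (1 + δ₁) * (l2 v) ^ 2)
    (hRIP₂ : ∀ v : Fin N → ℝ, spars v ≤ s₂ →
      (1 - δ₂) * (l2 v) ^ 2 ≤ (l2 (A.mulVec v)) ^ 2 ∧
      (l2 (A.mulVec v)) ^ 2 ≤ (1 + δ₂) * (l2 v) ^ 2) :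
    l1 (restr S (x - xb)) ≤ Real.sqrt s₂ * δ₁ * l1 (x - xb) + Real.sqrt (s₂ * (1 + δ₂)) * l2 e := by
  subst hS
  rcases S.eq_empty_or_nonempty with rfl | ⟨i, hi⟩
  · simp [l1, restr]
  have hS : 1 ≤ #S := card_pos.mpr ⟨i, hi⟩
  have hδ₁ : 0 ≤ δ₁ :=
    NearIsometryAt.nonneg (hRIP₁ _ ((spars_single_le i 1).trans (by omega))) (by simp)
  have hl2 := l2_restr_sub_le hy hxbls hδ₁
    (fun a b => hRIP₁ _ ((spars_smul_restr_add_smul_le hxbsupp a b).trans (by omega)))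
    (hRIP₂ _ (spars_restr_le S _)).2
  calc l1 (restr S (x - xb)) ≤ √(#S : ℝ) * l2 (restr S (x - xb)) :=
        l1_le_sqrt_card_mul_l2 fun j => restr_apply_of_notMem
    _ ≤ √(#S : ℝ) * (δ₁ * l1 (x - xb) + √(1 + δ₂) * l2 e) := by
        gcongr
        exact hl2.trans (by gcongr; exact l2_le_l1 _)
    _ = _ := by rw [Real.sqrt_mul (Nat.cast_nonneg _)]; ring

theorem stmt4 {M N : ℕ} (A : Matrix (Fin M) (Fin N) ℝ)
    (x : Fin N → ℝ) (e : Fin M → ℝ) (y : Fin M → ℝ)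
    (hy : y = A.mulVec x + e)
    (s₁ s₂ : ℕ) (hx : spars x ≤ s₁)
    (S : Finset (Fin N)) (hS : S.card = s₂)
    (xb : Fin N → ℝ)
    -- x̄ is supported on S and x̄_S = A_S† y, characterized by the normal equations
    (hxbsupp : ∀ i ∉ S, xb i = 0)
    (hxbls : ∀ i ∈ S, ∑ j, A j i * (A.mulVec xb j - y j) = 0)
    (δ₁ δ₂ : ℝ) (hδ₁ : δ₁ < 1)
    (hRIP₁ : ∀ v : Fin N → ℝ, spars v ≤ s₁ + s₂ →
      (1 - δ₁) * (l2 v) ^ 2 ≤ (l2 (A.mulVec v)) ^ 2 ∧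
      (l2 (A.mulVec v)) ^ 2 ≤ (1 + δ₁) * (l2 v) ^ 2)
    (hRIP₂ : ∀ v : Fin N → ℝ, spars v ≤ s₂ →
      (1 - δ₂) * (l2 v) ^ 2 ≤ (l2 (A.mulVec v)) ^ 2 ∧
      (l2 (A.mulVec v)) ^ 2 ≤ (1 + δ₂) * (l2 v) ^ 2) :
    l1 (restr S (x - xb)) ≤ Real.sqrt s₂ * δ₁ * l1 (x - xb) + Real.sqrt (s₂ * (1 + δ₂)) * l2 e :=
  stmt4_general A x e y hy s₁ s₂ hx S hS xb hxbsupp hxbls δ₁ δ₂ hRIP₁ hRIP₂
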